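/- arXiv:1911.06585 — 3 statements merged into one kernel-verified Lean document; each statement's English description precedes it below -/
import Mathlib

section
/- Let c ∈ ℕ, let the weighted system (N,R,wt,K) be c-closed, and consider the value computation recursion (V_n, 𝒱_n). Then for every n ∈ ℕ and every nonterminal A ∈ N: if V_{n+1}(A) ≠ V_n(A), then 𝒱_{n+1}(A) ∩ T_R^{(c)} is a proper superset of 𝒱_n(A) ∩ T_R^{(c)}. -/
open scoped Classical

/-- Trees over a ranked set `R` with arity function `ar`:
`RT.node r ts` is a tree whose root is labelled `r` and which has `ar r` children. -/
inductive RT (R : Type) (ar : R → ℕ) : Type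
  | node (r : R) (children : Fin (ar r) → RT R ar)

namespace RT

variable {R : Type} {ar : R → ℕ}

/-- The rule labelling the root of a tree. -/
def rootRule : RT R ar → R
  | node r _ => r

/-- The subtree at a position (`none` if the position is not a position of the tree). -/
def subAt : RT R ar → List ℕ → Option (RT R ar)
  | t, [] => some t
  | node r ts, i :: p => if h : i < ar r then subAt (ts ⟨i, h⟩) p else none

/-- Replace the subtree at a position by another tree. -/
def replaceAt : RT R ar → List ℕ → RT R ar → RT R ar
  | _, [], s => s
  | node r ts, i :: p, s => node r fun j => if j.1 = i then replaceAt (ts j) p s else ts j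

/-- The sequence of rule labels from the root to a position, inclusive. -/
def seqTo : RT R ar → List ℕ → Option (List R)
  | node r _, [] => some [r]
  | node r ts, i :: p => if h : i < ar r then (seqTo (ts ⟨i, h⟩) p).map (fun l => r :: l) else none

/-- `p` is a leaf position of `d`, i.e. a valid position with no child positions. -/
def LeafAt (d : RT R ar) (p : List ℕ) : Prop :=
  ∃ t, subAt d p = some t ∧ ar t.rootRule = 0

/-- The height of a tree: `0` on nullary nodes, otherwise `1` plus the maximum height
of the direct subtrees. -/
def height : RT R ar → ℕ
  | node _ ts => Finset.univ.sup fun i => height (ts i) + 1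

end RT

/-- The weight of a tree: evaluate it bottom-up, interpreting each rule `r` by the
operation `wt r`. -/
def wtval {K R : Type} {ar : R → ℕ} (wt : ∀ r : R, (Fin (ar r) → K) → K) : RT R ar → K
  | .node r ts => wt r fun i => wtval wt (ts i)

section Cyclicity

variable {R : Type} {ar : R → ℕ}

/-- A string over `R` is an elementary cycle if it has length `> 1`, its first and last
symbols coincide, and it becomes repetition-free after deleting its last (resp. first)
symbol. -/
def ElementaryCycle (w : List R) : Prop :=
  1 < w.length ∧ w.head? = w.getLast? ∧ w.dropLast.Nodup ∧ w.tail.Nodup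

/-- `ρ` is `(c,w)`-cyclic: `ρ = v₀ w v₁ ⋯ w v_c` (with `c` occurrences of the elementary
cycle `w`) where `w` is not an infix of any `vᵢ`. -/
def CWCyclic (c : ℕ) (w ρ : List R) : Prop :=
  ElementaryCycle w ∧
  ∃ v : ℕ → List R,
    ρ = v 0 ++ (((List.range c).map fun i => w ++ v (i + 1)).flatten) ∧
    ∀ i ≤ c, ¬ w <:+: v i

/-- `ρ` is `c`-cyclic: it is `(c,w)`-cyclic for some elementary cycle `w` and not
`(c',w')`-cyclic for any `c' > c` and elementary cycle `w'`. -/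
def CCyclic (c : ℕ) (ρ : List R) : Prop :=
  (∃ w, CWCyclic c w ρ) ∧ ∀ c', c < c' → ∀ w', ¬ CWCyclic c' w' ρ

/-- The leaf position `p` of `d` is `(c,w)`-cyclic. -/
def LeafCW (c : ℕ) (w : List R) (d : RT R ar) (p : List ℕ) : Prop :=
  RT.LeafAt d p ∧ ∃ ρ, RT.seqTo d p = some ρ ∧ CWCyclic c w ρ

/-- The leaf position `p` of `d` is `c`-cyclic. -/
def LeafC (c : ℕ) (d : RT R ar) (p : List ℕ) : Prop :=
  RT.LeafAt d p ∧ ∃ ρ, RT.seqTo d p = some ρ ∧ CCyclic c ρ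

/-- The tree `d` is `c`-cyclic: some leaf of `d` is `c`-cyclic and no leaf of `d` is
`c'`-cyclic for any `c' > c`. -/
def TreeC (c : ℕ) (d : RT R ar) : Prop :=
  (∃ p, LeafC c d p) ∧ ∀ c', c < c' → ∀ p, ¬ LeafC c' d p

/-- `d ⊢_w d'` : there are positions `p ≤ p'` of `d` whose connecting label sequence is
`w`, and `d'` is obtained by replacing the subtree at `p` by the subtree at `p'`.
(The position `p'` is `p ++ q`.) -/
def CutW (w : List R) (d d' : RT R ar) : Prop :=
  ∃ p q t s, RT.subAt d p = some t ∧ RT.subAt t q = some s ∧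
    RT.seqTo t q = some w ∧ d' = RT.replaceAt d p s

/-- `d ⊢ d'` : `d ⊢_w d'` for some elementary cycle `w`. -/
def Cut (d d' : RT R ar) : Prop := ∃ w, ElementaryCycle w ∧ CutW w d d'

/-- The set of `w`-cutout trees of `d`. -/
def cotreesW (w : List R) (d : RT R ar) : Set (RT R ar) := {d' | Relation.TransGen (CutW w) d d'}

/-- The set of cutout trees of `d`. -/
def cotrees (d : RT R ar) : Set (RT R ar) := {d' | Relation.TransGen Cut d d'}

end Cyclicity

section Rules

variable {N R : Type}

/-- Well-sorted trees over a rule system given by `lhs` and `rhs`: at each node labelled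
`r`, the `i`-th child is a well-sorted tree whose root label has left-hand side equal to
the `i`-th nonterminal of `rhs r`. -/
inductive WellSorted (lhs : R → N) (rhs : R → List N) :
    RT R (fun r => (rhs r).length) → Prop
  | node (r : R) (ts : Fin (rhs r).length → RT R fun r => (rhs r).length)
      (hsort : ∀ i, lhs (ts i).rootRule = (rhs r).get i)
      (hrec : ∀ i, WellSorted lhs rhs (ts i)) : WellSorted lhs rhs (RT.node r ts)

/-- `T_R` : the set of (well-sorted) trees over the rule system. -/
def TRset (lhs : R → N) (rhs : R → List N) : Set (RT R fun r => (rhs r).length) :=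
  {d | WellSorted lhs rhs d}

/-- `(T_R)_A` : the set of trees of sort `A`. -/
def TRA (lhs : R → N) (rhs : R → List N) (A : N) : Set (RT R fun r => (rhs r).length) :=
  {d | WellSorted lhs rhs d ∧ lhs d.rootRule = A}

/-- `T_R^{(c)}` : the set of trees that are `c'`-cyclic for some `c' ≤ c`. -/
def TRcset (lhs : R → N) (rhs : R → List N) (c : ℕ) : Set (RT R fun r => (rhs r).length) :=
  {d | WellSorted lhs rhs d ∧ ∃ c' ≤ c, TreeC c' d}

end Rules

/-- An infinitary sum operation on a commutative monoid `K`, turning it into a complete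
monoid: the sum of the empty family is `0`, the sum of a singleton family is its member,
the sum of a two-element family is the binary sum, and the partition law holds (every
partition of a countable index set `I` into sets indexed by `J` is given by the fibers
of a map `g : I → J`). -/
structure InfSum (K : Type) [AddCommMonoid K] where
  isum : ∀ {I : Type} [Countable I], (I → K) → K
  isum_empty : ∀ {I : Type} [Countable I] (f : I → K), IsEmpty I → isum f = 0
  isum_single : ∀ {I : Type} [Countable I] (f : I → K) (j : I), (∀ i, i = j) → isum f = f j
  isum_pair : ∀ {I : Type} [Countable I] (f : I → K) (j j' : I), j ≠ j' →
    (∀ i, i = j ∨ i = j') → isum f = f j + f j'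
  isum_partition : ∀ {I J : Type} [Countable I] [Countable J] (f : I → K) (g : I → J),
    isum f = isum fun j : J => isum fun i : {i : I // g i = j} => f i.1

section MMonoid

variable {K : Type} [AddCommMonoid K]

/-- A complete monoid is d-complete if, whenever all the partial sums `Σ_{i ≤ n} f i`
eventually equal `k`, the infinitary sum of the family equals `k`. -/
def InfSum.DComplete (S : InfSum K) : Prop :=
  ∀ (k : K) (f : ℕ → K),
    (∃ n₀ : ℕ, ∀ n, n₀ ≤ n → (∑ i ∈ Finset.range (n + 1), f i) = k) → S.isum f = k

/-- A complete monoid is completely idempotent if the infinitary sum of every constant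
family over a nonempty countable index set is that constant. -/
def InfSum.CompletelyIdempotent (S : InfSum K) : Prop :=
  ∀ (I : Type) [Countable I], Nonempty I → ∀ k : K, S.isum (fun _ : I => k) = k

/-- The family `Ω` of operation sets contains all the null (constantly `0`) operations. -/
def HasZeroOps (Ω : ∀ n : ℕ, Set ((Fin n → K) → K)) : Prop :=
  ∀ n : ℕ, (fun _ : Fin n → K => (0 : K)) ∈ Ω n

/-- Distributivity of an M-monoid: every operation in `Ω` distributes over `+` in each
argument, and `0` is absorbing for every operation in `Ω`. -/
def DistributiveOps (Ω : ∀ n : ℕ, Set ((Fin n → K) → K)) : Prop :=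
  ∀ n : ℕ, ∀ ω ∈ Ω n,
    (∀ (x : Fin n → K) (i : Fin n) (a b : K),
      ω (Function.update x i (a + b)) = ω (Function.update x i a) + ω (Function.update x i b)) ∧
    (∀ x : Fin n → K, (∃ i, x i = 0) → ω x = 0)

end MMonoid

/-- The weighted system `(N, R, wt, K)` is `c`-closed: for every well-sorted tree `d` and
elementary cycle `w` such that some leaf position of `d` is `(c+1,w)`-cyclic, the weight
of `d` is subsumed by the (finite) `⊕`-sum of the weights of the `w`-cutout trees of `d`. -/
def CClosed {K : Type} [AddCommMonoid K] {N R : Type} (lhs : R → N) (rhs : R → List N)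
    (wt : ∀ r : R, (Fin (rhs r).length → K) → K) (c : ℕ) : Prop :=
  ∀ d : RT R (fun r => (rhs r).length), WellSorted lhs rhs d →
    ∀ w : List R, ElementaryCycle w → (∃ p, LeafCW (c + 1) w d p) →
      (wtval wt d + ∑ᶠ d' ∈ cotreesW w d, wtval wt d') = ∑ᶠ d' ∈ cotreesW w d, wtval wt d'

section ValueComputation

variable {K : Type} [AddCommMonoid K] {N R : Type} [Fintype N] [Nonempty N] [Fintype R]

/-- `select e n` : the nonterminal treated in the `n`-th iteration of the inner for loop,
given an enumeration `e` of the nonterminals. -/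
def select (e : Fin (Fintype.card N) → N) (n : ℕ) : N :=
  e ⟨n % Fintype.card N, Nat.mod_lt _ Fintype.card_pos⟩

/-- The value computation recursion `V_n : N → K`. -/
noncomputable def Vrec (lhs : R → N) (rhs : R → List N)
    (wt : ∀ r : R, (Fin (rhs r).length → K) → K)
    (e : Fin (Fintype.card N) → N) : ℕ → N → K
  | 0, _ => 0
  | n + 1, A =>
      if select e n = A then
        ∑ᶠ r ∈ {r : R | lhs r = A}, wt r fun i => Vrec lhs rhs wt e n ((rhs r).get i)
      else Vrec lhs rhs wt e n A

/-- The derivation-set recursion `𝒱_n : N → P(T_R)`. -/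
noncomputable def Mrec (lhs : R → N) (rhs : R → List N) (e : Fin (Fintype.card N) → N) :
    ℕ → N → Set (RT R fun r => (rhs r).length)
  | 0, _ => ∅
  | n + 1, A =>
      if select e n = A then
        {d | ∃ (r : R) (_ : lhs r = A) (ts : Fin (rhs r).length → RT R fun r => (rhs r).length),
          d = RT.node r ts ∧ ∀ i, ts i ∈ Mrec lhs rhs e n ((rhs r).get i)}
      else Mrec lhs rhs e n A

end ValueComputation

/-!
By distributivity, `V_n(A)` is the sum of the weights of the trees in `𝒱_n(A)`. This set is
finite and closed under cutting out elementary cycles, so `c`-closedness lets one discard its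
trees that are not at most `c`-cyclic one by one, largest first: such a tree has a subtree with
a `(c+1,w)`-cyclic leaf, whose weight is absorbed by the weights of its `w`-cutout trees, and
the absorption carries over to the whole tree because the weight of a tree depends additively
on the weight of any of its subtrees. Hence `V_n(A)` depends only on `𝒱_n(A) ∩ T_R^{(c)}`, and
since `𝒱_n(A)` grows with `n`, a change of value forces this intersection to grow properly.
-/

theorem Nat.exists_greatest_of_forall_le {P : ℕ → Prop} {B n : ℕ} (hB : ∀ m, P m → m ≤ B)
    (hn : P n) : ∃ m, P m ∧ ∀ k, m < k → ¬ P k :=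
  ⟨Nat.findGreatest P B, Nat.findGreatest_spec (hB n hn) hn,
    fun _ hk hPk => Nat.findGreatest_is_greatest hk (hB _ hPk) hPk⟩

theorem Finset.sum_filter_eq_sum_of_absorbing {α M : Type*} [AddCommMonoid M] (f : α → M)
    (p : α → Prop) [DecidablePred p] (μ : α → ℕ) (S : Finset α)
    (habs : ∀ x ∈ S, ¬ p x → ∃ T ⊆ S, (∀ y ∈ T, μ y < μ x) ∧
      f x + ∑ y ∈ T, f y = ∑ y ∈ T, f y) :
    ∑ x ∈ S with p x, f x = ∑ x ∈ S, f x := by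
  classical
  induction S using Finset.strongInduction with
  | H S ih =>
  by_cases hgood : ∀ x ∈ S, p x
  · rw [Finset.filter_true_of_mem hgood]
  push Not at hgood
  obtain ⟨d, hd, hdmax⟩ := Finset.exists_max_image (S.filter (¬ p ·)) μ
    (by simpa [Finset.Nonempty] using hgood)
  rw [Finset.mem_filter] at hd
  have hsub : ∀ {x}, x ∈ S → ¬ p x → ∀ {T}, T ⊆ S → (∀ y ∈ T, μ y < μ x) → T ⊆ S.erase d :=
    fun hx hpx T hTS hT y hy => Finset.mem_erase.2
      ⟨fun hyd => (hT y hy).not_ge (hyd ▸ hdmax _ (Finset.mem_filter.2 ⟨hx, hpx⟩)), hTS hy⟩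
  have herase : ∑ x ∈ S.erase d with p x, f x = ∑ x ∈ S.erase d, f x := by
    refine ih _ (Finset.erase_ssubset hd.1) fun x hx hpx => ?_
    obtain ⟨T, hTS, hT, habsx⟩ := habs x (Finset.mem_of_mem_erase hx) hpx
    exact ⟨T, hsub (Finset.mem_of_mem_erase hx) hpx hTS hT, hT, habsx⟩
  obtain ⟨T, hTS, hT, habsd⟩ := habs d hd.1 hd.2
  have hTd := hsub hd.1 hd.2 hTS hT
  rw [← Finset.add_sum_erase S f hd.1, ← Finset.sum_sdiff hTd, add_left_comm, habsd,
    Finset.sum_sdiff hTd, ← herase, Finset.filter_erase, Finset.erase_eq_of_notMem]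
  simpa using fun _ => hd.2

namespace RT

variable {R : Type} {ar : R → ℕ}

def size : RT R ar → ℕ
  | node _ ts => ∑ i, size (ts i) + 1

theorem size_child_lt (r : R) (ts : Fin (ar r) → RT R ar) (i : Fin (ar r)) :
    (ts i).size < (node r ts).size := by
  rw [size]
  exact Nat.lt_succ_of_le <|
    Finset.single_le_sum (f := fun j => (ts j).size) (fun _ _ => Nat.zero_le _) (Finset.mem_univ i)

theorem node_sigma_injective :
    Function.Injective fun x : Σ r, Fin (ar r) → RT R ar => node x.1 x.2 := by
  rintro ⟨r, ts⟩ ⟨r', ts'⟩ h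
  obtain ⟨rfl, h⟩ := node.inj h
  cases eq_of_heq h
  rfl

theorem size_pos (d : RT R ar) : 0 < d.size := by
  cases d; simp [size]

theorem subAt_nil (d : RT R ar) : d.subAt [] = some d := by cases d; rfl

theorem replaceAt_nil (d s : RT R ar) : d.replaceAt [] s = s := by cases d; rfl

theorem subAt_cons (r : R) (ts : Fin (ar r) → RT R ar) (i : ℕ) (p : List ℕ) :
    (node r ts).subAt (i :: p) = if h : i < ar r then (ts ⟨i, h⟩).subAt p else none := rfl

theorem subAt_cons_eq_some {r : R} {ts : Fin (ar r) → RT R ar} {i : ℕ} {p : List ℕ} {t : RT R ar}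
    (h : (node r ts).subAt (i :: p) = some t) : ∃ hi : i < ar r, (ts ⟨i, hi⟩).subAt p = some t := by
  rw [subAt_cons] at h
  split_ifs at h with hi
  exact ⟨hi, h⟩

theorem subAt_append (d : RT R ar) (p q : List ℕ) :
    d.subAt (p ++ q) = (d.subAt p).bind (·.subAt q) := by
  induction p generalizing d with
  | nil => simp [subAt_nil]
  | cons i p ih =>
    cases d with
    | node r ts =>
      simp only [List.cons_append, subAt_cons]
      split_ifs <;> simp [ih]

theorem size_le_of_subAt {d t : RT R ar} {p : List ℕ} (h : d.subAt p = some t) :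
    t.size ≤ d.size := by
  induction p generalizing d with
  | nil => rw [subAt_nil, Option.some_inj] at h; rw [h]
  | cons i p ih =>
    cases d with
    | node r ts =>
      obtain ⟨hi, h⟩ := subAt_cons_eq_some h
      exact (ih h).trans (size_child_lt r ts _).le

theorem size_lt_of_subAt_cons {d t : RT R ar} {i : ℕ} {p : List ℕ}
    (h : d.subAt (i :: p) = some t) : t.size < d.size := by
  cases d with
  | node r ts =>
    obtain ⟨hi, h⟩ := subAt_cons_eq_some h
    exact (size_le_of_subAt h).trans_lt (size_child_lt r ts _)

theorem length_lt_size_of_subAt {d t : RT R ar} {p : List ℕ} (h : d.subAt p = some t) :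
    p.length < d.size := by
  induction p generalizing d with
  | nil => cases d; simp [size]
  | cons i p ih =>
    cases d with
    | node r ts =>
      obtain ⟨hi, h⟩ := subAt_cons_eq_some h
      simpa using (Nat.succ_le_of_lt (ih h)).trans_lt (size_child_lt r ts _)

theorem exists_leaf (d : RT R ar) : ∃ p, d.LeafAt p := by
  induction d with
  | node r ts ih =>
    by_cases h : ar r = 0
    · exact ⟨[], _, subAt_nil _, h⟩
    · obtain ⟨p, t, hp, ht⟩ := ih ⟨0, Nat.pos_of_ne_zero h⟩
      exact ⟨0 :: p, t, by rwa [subAt_cons, dif_pos], ht⟩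

theorem finite_setOf_size_le [Finite R] (n : ℕ) : {d : RT R ar | d.size ≤ n}.Finite := by
  induction n with
  | zero => exact Set.finite_empty.subset fun d hd => (size_pos d).not_ge hd
  | succ n ih =>
    refine (Set.finite_iUnion fun r => (Set.Finite.pi fun _ => ih).image (node r)).subset ?_
    rintro ⟨r, ts⟩ hd
    exact Set.mem_iUnion.2
      ⟨r, ts, fun i _ => Nat.le_of_lt_succ ((size_child_lt r ts i).trans_le hd), rfl⟩

theorem replaceAt_cons_of_lt {r : R} {ts : Fin (ar r) → RT R ar} {i : ℕ} (hi : i < ar r)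
    (p : List ℕ) (s : RT R ar) :
    (node r ts).replaceAt (i :: p) s =
      node r (Function.update ts ⟨i, hi⟩ ((ts ⟨i, hi⟩).replaceAt p s)) := by
  simp only [replaceAt, node.injEq, heq_eq_eq, true_and]
  funext j
  by_cases hj : j = ⟨i, hi⟩
  · subst hj; simp
  · rw [Function.update_of_ne hj, if_neg fun h => hj (Fin.ext h)]

theorem subAt_replaceAt_self {d t : RT R ar} {p : List ℕ} (h : d.subAt p = some t)
    (s : RT R ar) : (d.replaceAt p s).subAt p = some s := by
  induction p generalizing d with
  | nil => rw [replaceAt_nil, subAt_nil]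
  | cons i p ih =>
    cases d with
    | node r ts =>
      obtain ⟨hi, h⟩ := subAt_cons_eq_some h
      rw [replaceAt_cons_of_lt hi, subAt_cons, dif_pos hi, Function.update_self]
      exact ih h

theorem replaceAt_subAt {d t : RT R ar} {p : List ℕ} (h : d.subAt p = some t) :
    d.replaceAt p t = d := by
  induction p generalizing d with
  | nil => rw [subAt_nil, Option.some_inj] at h; rw [replaceAt_nil, h]
  | cons i p ih =>
    cases d with
    | node r ts =>
      obtain ⟨hi, h⟩ := subAt_cons_eq_some h
      rw [replaceAt_cons_of_lt hi, ih h, Function.update_eq_self]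

theorem replaceAt_replaceAt (d : RT R ar) (p : List ℕ) (a b : RT R ar) :
    (d.replaceAt p a).replaceAt p b = d.replaceAt p b := by
  induction p generalizing d with
  | nil => rw [replaceAt_nil, replaceAt_nil]
  | cons i p ih =>
    cases d with
    | node r ts =>
      simp only [replaceAt, node.injEq, heq_eq_eq, true_and]
      funext j
      by_cases hj : j.1 = i <;> simp [hj, ih]

theorem replaceAt_append {d t : RT R ar} {p : List ℕ} (h : d.subAt p = some t)
    (q : List ℕ) (s : RT R ar) :
    d.replaceAt (p ++ q) s = d.replaceAt p (t.replaceAt q s) := by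
  induction p generalizing d with
  | nil => rw [subAt_nil, Option.some_inj] at h; rw [List.nil_append, replaceAt_nil, h]
  | cons i p ih =>
    cases d with
    | node r ts =>
      obtain ⟨hi, h⟩ := subAt_cons_eq_some h
      rw [List.cons_append, replaceAt_cons_of_lt hi, replaceAt_cons_of_lt hi, ih h]

theorem size_replaceAt_lt {d t s : RT R ar} {p : List ℕ} (h : d.subAt p = some t)
    (hs : s.size < t.size) : (d.replaceAt p s).size < d.size := by
  induction p generalizing d with
  | nil => rw [subAt_nil, Option.some_inj] at h; rwa [replaceAt_nil, h]
  | cons i p ih =>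
    cases d with
    | node r ts =>
      obtain ⟨hi, h⟩ := subAt_cons_eq_some h
      rw [replaceAt_cons_of_lt hi, size, size, add_lt_add_iff_right]
      refine Finset.sum_lt_sum (fun j _ => ?_) ⟨⟨i, hi⟩, Finset.mem_univ _, by simpa using ih h⟩
      by_cases hj : j = ⟨i, hi⟩
      · subst hj; simpa using (ih h).le
      · rw [Function.update_of_ne hj]

theorem replaceAt_injective {d t : RT R ar} {p : List ℕ}
    (h : d.subAt p = some t) : Function.Injective (d.replaceAt p) := fun x y hxy =>
  Option.some_inj.1 <| by rw [← subAt_replaceAt_self h, hxy, subAt_replaceAt_self h]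

theorem seqTo_cons_eq_some {r : R} {ts : Fin (ar r) → RT R ar} {i : ℕ} {p : List ℕ}
    {ρ : List R} (h : (node r ts).seqTo (i :: p) = some ρ) :
    ∃ hi : i < ar r, ∃ l, (ts ⟨i, hi⟩).seqTo p = some l ∧ ρ = r :: l := by
  simp only [seqTo] at h
  split_ifs at h with hi
  obtain ⟨l, hl, rfl⟩ := Option.map_eq_some_iff.1 h
  exact ⟨hi, l, hl, rfl⟩

theorem length_of_seqTo {d : RT R ar} {p : List ℕ} {ρ : List R} (h : d.seqTo p = some ρ) :
    ρ.length = p.length + 1 := by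
  induction p generalizing d ρ with
  | nil => cases d; cases h; rfl
  | cons i p ih =>
    cases d with
    | node r ts =>
      obtain ⟨hi, l, hl, rfl⟩ := seqTo_cons_eq_some h
      simp [ih hl]

theorem head?_of_seqTo {d : RT R ar} {p : List ℕ} {ρ : List R} (h : d.seqTo p = some ρ) :
    ρ.head? = some d.rootRule := by
  cases p with
  | nil => cases d; cases h; rfl
  | cons i p =>
    cases d with
    | node r ts =>
      obtain ⟨hi, l, hl, rfl⟩ := seqTo_cons_eq_some h
      rfl

theorem getLast?_of_seqTo {d : RT R ar} {p : List ℕ} {ρ : List R} (h : d.seqTo p = some ρ) :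
    ∃ t, d.subAt p = some t ∧ ρ.getLast? = some t.rootRule := by
  induction p generalizing d ρ with
  | nil => cases d; cases h; exact ⟨_, rfl, rfl⟩
  | cons i p ih =>
    cases d with
    | node r ts =>
      obtain ⟨hi, l, hl, rfl⟩ := seqTo_cons_eq_some h
      obtain ⟨t, ht, hlast⟩ := ih hl
      have hne : l ≠ [] := List.ne_nil_of_length_pos (by simp [length_of_seqTo hl])
      obtain ⟨a, l, rfl⟩ := List.exists_cons_of_ne_nil hne
      exact ⟨t, by rwa [subAt_cons, dif_pos hi], by rwa [List.getLast?_cons_cons]⟩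

theorem exists_seqTo_of_subAt {d t : RT R ar} {p : List ℕ} (h : d.subAt p = some t) :
    ∃ ρ, d.seqTo p = some ρ := by
  induction p generalizing d with
  | nil => cases d; exact ⟨_, rfl⟩
  | cons i p ih =>
    cases d with
    | node r ts =>
      obtain ⟨hi, h⟩ := subAt_cons_eq_some h
      obtain ⟨ρ, hρ⟩ := ih h
      exact ⟨r :: ρ, by simp [seqTo, hi, hρ]⟩

theorem seqTo_drop {d : RT R ar} {p : List ℕ} {ρ : List R} (h : d.seqTo p = some ρ)
    {j : ℕ} (hj : j ≤ p.length) :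
    ∃ t, d.subAt (p.take j) = some t ∧ t.seqTo (p.drop j) = some (ρ.drop j) := by
  induction j generalizing d p ρ with
  | zero => exact ⟨d, subAt_nil d, h⟩
  | succ j ih =>
    cases p with
    | nil => simp at hj
    | cons i p =>
      cases d with
      | node r ts =>
        obtain ⟨hi, l, hl, rfl⟩ := seqTo_cons_eq_some h
        obtain ⟨t, ht, hseq⟩ := ih hl (Nat.le_of_succ_le_succ hj)
        exact ⟨t, by rwa [List.take_succ_cons, subAt_cons, dif_pos hi], hseq⟩

end RT

section Cutting

variable {R : Type} {ar : R → ℕ}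

open RT

theorem CutW.size_lt {w : List R} (hw : 1 < w.length) {d d' : RT R ar} (h : CutW w d d') :
    d'.size < d.size := by
  obtain ⟨p, q, t, s, hp, hq, hseq, rfl⟩ := h
  obtain ⟨i, q, rfl⟩ := List.exists_cons_of_length_pos
    (by have := length_of_seqTo hseq; omega : 0 < q.length)
  exact size_replaceAt_lt hp (size_lt_of_subAt_cons hq)

theorem size_lt_of_mem_cotreesW {w : List R} (hw : 1 < w.length) {d d' : RT R ar}
    (h : d' ∈ cotreesW w d) : d'.size < d.size := by
  induction h with
  | single h => exact h.size_lt hw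
  | tail _ h ih => exact (h.size_lt hw).trans ih

theorem cotreesW_finite [Finite R] {w : List R} (hw : 1 < w.length) (d : RT R ar) :
    (cotreesW w d).Finite :=
  (finite_setOf_size_le d.size).subset fun _ h => (size_lt_of_mem_cotreesW hw h).le

theorem CutW.replaceAt {w : List R} {d x y t : RT R ar} {p : List ℕ} (hp : d.subAt p = some t)
    (h : CutW w x y) : CutW w (d.replaceAt p x) (d.replaceAt p y) := by
  obtain ⟨p', q, t', s, hp', hq, hseq, rfl⟩ := h
  refine ⟨p ++ p', q, t', s, ?_, hq, hseq, ?_⟩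
  · simpa [subAt_append, subAt_replaceAt_self hp] using hp'
  · rw [replaceAt_append (subAt_replaceAt_self hp x), replaceAt_replaceAt]

theorem replaceAt_mem_cotreesW {w : List R} {d t x : RT R ar} {p : List ℕ}
    (hp : d.subAt p = some t) (h : x ∈ cotreesW w t) : d.replaceAt p x ∈ cotreesW w d := by
  induction h with
  | single h =>
    have := h.replaceAt hp
    rw [replaceAt_subAt hp] at this
    exact .single this
  | tail _ h ih => exact ih.tail (h.replaceAt hp)

theorem ElementaryCycle.rootRule_eq_of_seqTo {w : List R} (hw : ElementaryCycle w)
    {t : RT R ar} {q : List ℕ} (h : t.seqTo q = some w) :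
    ∃ s, t.subAt q = some s ∧ s.rootRule = t.rootRule := by
  obtain ⟨s, hs, hlast⟩ := getLast?_of_seqTo h
  refine ⟨s, hs, Option.some_inj.1 ?_⟩
  rw [← hlast, ← hw.2.1, head?_of_seqTo h]

end Cutting

section ListCyclicity

variable {R : Type} {w ρ : List R} {c : ℕ}

theorem ElementaryCycle.ne_nil (hw : ElementaryCycle w) : w ≠ [] :=
  List.ne_nil_of_length_pos (by have := hw.1; omega)

theorem elementaryCycle_pair (r : R) : ElementaryCycle [r, r] := by
  simp [ElementaryCycle]

theorem ElementaryCycle.not_infix_nil (hw : ElementaryCycle w) : ¬ w <:+: [] :=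
  fun h => hw.ne_nil (List.eq_nil_of_infix_nil h)

theorem cwCyclic_zero (hw : ElementaryCycle w) (hρ : ¬ w <:+: ρ) : CWCyclic 0 w ρ :=
  ⟨hw, fun _ => ρ, by simp, fun i hi => by rwa [Nat.le_zero.1 hi]⟩

theorem CWCyclic.append_left (h : CWCyclic c w ρ) : CWCyclic (c + 1) w (w ++ ρ) := by
  obtain ⟨hw, v, rfl, hv⟩ := h
  refine ⟨hw, fun | 0 => [] | i + 1 => v i, ?_, ?_⟩
  · simp [List.range_succ_eq_map, Function.comp_def]
  · rintro (_ | i) hi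
    exacts [hw.not_infix_nil, hv i (by omega)]

theorem CWCyclic.cons {x : R} (h : CWCyclic c w ρ) (hx : ¬ w <+: x :: ρ) :
    CWCyclic c w (x :: ρ) := by
  obtain ⟨hw, v, rfl, hv⟩ := h
  refine ⟨hw, fun | 0 => x :: v 0 | i + 1 => v (i + 1), by simp, ?_⟩
  rintro (_ | i) hi
  · rw [List.infix_cons_iff, not_or]
    exact ⟨fun hpre => hx (hpre.trans (by simp)), hv 0 (Nat.zero_le _)⟩
  · exact hv (i + 1) hi

theorem ElementaryCycle.exists_cwCyclic (hw : ElementaryCycle w) (ρ : List R) :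
    ∃ c, CWCyclic c w ρ := by
  induction hn : ρ.length using Nat.strong_induction_on generalizing ρ with
  | _ n ih =>
  by_cases hpre : w <+: ρ
  · obtain ⟨b, rfl⟩ := hpre
    have : b.length < n := by
      rw [← hn, List.length_append, Nat.lt_add_left_iff_pos]
      exact List.length_pos_of_ne_nil hw.ne_nil
    obtain ⟨c, hc⟩ := ih _ this b rfl
    exact ⟨c + 1, hc.append_left⟩
  · cases ρ with
    | nil => exact ⟨0, cwCyclic_zero hw hw.not_infix_nil⟩
    | cons x ρ =>
      obtain ⟨c, hc⟩ := ih ρ.length (by simp [← hn]) ρ rfl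
      exact ⟨c, hc.cons hpre⟩

theorem CWCyclic.exists_append_of_succ (h : CWCyclic (c + 1) w ρ) :
    ∃ u ρ', u ≠ [] ∧ ρ = u ++ ρ' ∧ CWCyclic c w ρ' := by
  obtain ⟨hw, v, rfl, hv⟩ := h
  refine ⟨v 0 ++ w, _, by simp [hw.ne_nil], ?_,
    hw, fun i => v (i + 1), rfl, fun i hi => hv (i + 1) (by omega)⟩
  simp [List.range_succ_eq_map, Function.comp_def]

theorem CWCyclic.le_length (h : CWCyclic c w ρ) : c ≤ ρ.length := by
  induction c generalizing ρ with
  | zero => exact Nat.zero_le _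
  | succ c ih =>
    obtain ⟨u, ρ', hu, rfl, h'⟩ := h.exists_append_of_succ
    have := List.length_pos_of_ne_nil hu
    have := ih h'
    rw [List.length_append]
    omega

theorem CWCyclic.exists_drop {k : ℕ} (h : CWCyclic (c + k) w ρ) :
    ∃ j, CWCyclic c w (ρ.drop j) := by
  induction k generalizing ρ with
  | zero => exact ⟨0, h⟩
  | succ k ih =>
    obtain ⟨u, ρ', -, rfl, h'⟩ := (show CWCyclic (c + k + 1) w ρ from h).exists_append_of_succ
    obtain ⟨j, hj⟩ := ih h'
    exact ⟨u.length + j, by rwa [← List.drop_drop, List.drop_left]⟩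

theorem exists_cCyclic (r : R) (ρ : List R) : ∃ c, CCyclic c ρ := by
  obtain ⟨c, hc⟩ := (elementaryCycle_pair r).exists_cwCyclic ρ
  obtain ⟨m, ⟨w, hm⟩, hmax⟩ := Nat.exists_greatest_of_forall_le
    (P := fun m => ∃ w, CWCyclic m w ρ) (fun _ ⟨_, h⟩ => h.le_length) ⟨_, hc⟩
  exact ⟨m, ⟨w, hm⟩, fun c' hc' w' h' => hmax c' hc' ⟨w', h'⟩⟩

end ListCyclicity

section TreeCyclicity

variable {R : Type} {ar : R → ℕ}

open RT

theorem LeafC.le_size {L : ℕ} {d : RT R ar} {p : List ℕ} (h : LeafC L d p) : L ≤ d.size := by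
  obtain ⟨⟨t, ht, -⟩, ρ, hρ, ⟨w, hw⟩, -⟩ := h
  have := hw.le_length
  have := length_of_seqTo hρ
  have := length_lt_size_of_subAt ht
  omega

theorem exists_treeC (d : RT R ar) : ∃ M, TreeC M d := by
  obtain ⟨p, hp⟩ := d.exists_leaf
  obtain ⟨ρ, hρ⟩ := exists_seqTo_of_subAt hp.choose_spec.1
  obtain ⟨L, hL⟩ := exists_cCyclic d.rootRule ρ
  obtain ⟨M, hM, hmax⟩ := Nat.exists_greatest_of_forall_le (P := fun m => ∃ p, LeafC m d p)
    (fun _ ⟨_, h⟩ => h.le_size) ⟨p, hp, ρ, hρ, hL⟩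
  exact ⟨M, hM, fun c' hc' p' h' => hmax c' hc' ⟨p', h'⟩⟩

theorem TreeC.exists_subAt_leafCW {M c : ℕ} {d : RT R ar} (h : TreeC M d) (hc : c + 1 ≤ M) :
    ∃ p d₀ w q, d.subAt p = some d₀ ∧ LeafCW (c + 1) w d₀ q := by
  obtain ⟨⟨p, ⟨t, ht, hleaf⟩, ρ, hρ, ⟨w, hw⟩, -⟩, -⟩ := h
  have hw' : CWCyclic (c + 1 + (M - (c + 1))) w ρ := by rwa [Nat.add_sub_cancel' hc]
  obtain ⟨j, hj⟩ := hw'.exists_drop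
  have hjp : j ≤ p.length := by
    have := hj.le_length
    have := length_of_seqTo hρ
    rw [List.length_drop] at *
    omega
  obtain ⟨d₀, hd₀, hseq⟩ := seqTo_drop hρ hjp
  refine ⟨p.take j, d₀, w, p.drop j, hd₀, ⟨t, ?_, hleaf⟩, ρ.drop j, hseq, hj⟩
  rwa [← List.take_append_drop j p, subAt_append, hd₀, Option.bind_some] at ht

end TreeCyclicity

section Weights

variable {K R : Type} [AddCommMonoid K] {ar : R → ℕ} {Ω : ∀ n : ℕ, Set ((Fin n → K) → K)}

def DistributiveOps.toMultilinearMap (hΩd : DistributiveOps Ω) {n : ℕ}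
    {ω : (Fin n → K) → K} (hω : ω ∈ Ω n) : MultilinearMap ℕ (fun _ : Fin n => K) K where
  toFun := ω
  map_update_add' := by
    intro _ x i a b
    convert (hΩd n ω hω).1 x i a b
  map_update_smul' := by
    intro _ x i m a
    induction m with
    | zero => simpa using (hΩd n ω hω).2 _ ⟨i, by simp⟩
    | succ m ih => rw [succ_nsmul, succ_nsmul, ← ih]; convert (hΩd n ω hω).1 x i (m • a) a

variable (wt : ∀ r : R, (Fin (ar r) → K) → K)

def wtCtx : RT R ar → List ℕ → K → K
  | _, [], k => k
  | .node r ts, i :: p, k =>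
      if h : i < ar r then
        wt r (Function.update (fun j => wtval wt (ts j)) ⟨i, h⟩ (wtCtx (ts ⟨i, h⟩) p k))
      else 0

theorem wtCtx_nil (d : RT R ar) (k : K) : wtCtx wt d [] k = k := by cases d; rfl

theorem wtCtx_wtval {d t : RT R ar} {p : List ℕ} (h : d.subAt p = some t) (s : RT R ar) :
    wtCtx wt d p (wtval wt s) = wtval wt (d.replaceAt p s) := by
  induction p generalizing d with
  | nil => rw [wtCtx_nil, RT.replaceAt_nil]
  | cons i p ih =>
    cases d with
    | node r ts =>
      obtain ⟨hi, h⟩ := RT.subAt_cons_eq_some h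
      rw [RT.replaceAt_cons_of_lt hi, wtCtx, dif_pos hi, ih h, wtval]
      congr 1
      funext j
      exact (Function.apply_update (fun _ => wtval wt) ts _ _ j).symm

variable {wt}

def wtCtxHom (hΩd : DistributiveOps Ω) (hwt : ∀ r, wt r ∈ Ω (ar r)) (d : RT R ar)
    (p : List ℕ) : K →+ K where
  toFun := wtCtx wt d p
  map_zero' := by
    induction p generalizing d with
    | nil => exact wtCtx_nil wt d 0
    | cons i p ih =>
      cases d with
      | node r ts =>
        rw [wtCtx]
        split_ifs with hi
        · exact (hΩd.toMultilinearMap (hwt r)).map_coord_zero ⟨i, hi⟩ (by simp [ih])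
        · rfl
  map_add' a b := by
    induction p generalizing d with
    | nil => simp only [wtCtx_nil]
    | cons i p ih =>
      cases d with
      | node r ts =>
        simp only [wtCtx]
        split_ifs with hi
        · rw [ih]
          exact (hΩd.toMultilinearMap (hwt r)).map_update_add _ _ _ _
        · rw [add_zero]

end Weights

theorem WellSorted.subAt {N R : Type} {lhs : R → N} {rhs : R → List N}
    {d t : RT R fun r => (rhs r).length} {p : List ℕ} (hd : WellSorted lhs rhs d)
    (h : d.subAt p = some t) : WellSorted lhs rhs t := by
  induction p generalizing d with
  | nil => rw [RT.subAt_nil, Option.some_inj] at h; rwa [← h]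
  | cons i p ih =>
    obtain ⟨r, ts, -, hts⟩ := hd
    obtain ⟨hi, h⟩ := RT.subAt_cons_eq_some h
    exact ih (hts _) h

section Closed

variable {K N R : Type} [AddCommMonoid K] [Finite R] {lhs : R → N} {rhs : R → List N}
  {Ω : ∀ n : ℕ, Set ((Fin n → K) → K)} {wt : ∀ r : R, (Fin (rhs r).length → K) → K} {c : ℕ}

theorem exists_absorbing_cotreesW (hΩd : DistributiveOps Ω)
    (hwt : ∀ r, wt r ∈ Ω (rhs r).length) (hclosed : CClosed lhs rhs wt c)
    {d : RT R fun r => (rhs r).length} (hws : WellSorted lhs rhs d)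
    (hd : d ∉ TRcset lhs rhs c) :
    ∃ w, ElementaryCycle w ∧ ∃ T : Finset (RT R fun r => (rhs r).length),
      ↑T ⊆ cotreesW w d ∧ wtval wt d + ∑ x ∈ T, wtval wt x = ∑ x ∈ T, wtval wt x := by
  obtain ⟨M, hM⟩ := exists_treeC d
  have hcM : c + 1 ≤ M := by
    by_contra h
    exact hd ⟨hws, M, by omega, hM⟩
  obtain ⟨p, d₀, w, q, hp, hleaf⟩ := hM.exists_subAt_leafCW hcM
  have hw : ElementaryCycle w := hleaf.2.choose_spec.2.1
  have hfin := cotreesW_finite hw.1 d₀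
  have habs := congrArg (wtCtxHom hΩd hwt d p) (hclosed d₀ (hws.subAt hp) w hw ⟨q, hleaf⟩)
  rw [finsum_mem_eq_finite_toFinset_sum _ hfin, map_add, map_sum] at habs
  simp only [wtCtxHom, AddMonoidHom.coe_mk, ZeroHom.coe_mk, wtCtx_wtval wt hp,
    RT.replaceAt_subAt hp] at habs
  refine ⟨w, hw, hfin.toFinset.image (d.replaceAt p), ?_, ?_⟩
  · intro x hx
    obtain ⟨y, hy, rfl⟩ := Finset.mem_image.1 hx
    exact replaceAt_mem_cotreesW hp (hfin.mem_toFinset.1 hy)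
  · rwa [Finset.sum_image fun x _ y _ h => RT.replaceAt_injective hp h]

theorem finsum_mem_inter_TRcset (hΩd : DistributiveOps Ω)
    (hwt : ∀ r, wt r ∈ Ω (rhs r).length) (hclosed : CClosed lhs rhs wt c)
    {S : Set (RT R fun r => (rhs r).length)} (hS : S.Finite)
    (hws : ∀ d ∈ S, WellSorted lhs rhs d)
    (hcut : ∀ d ∈ S, ∀ w, ElementaryCycle w → cotreesW w d ⊆ S) :
    ∑ᶠ d ∈ S ∩ TRcset lhs rhs c, wtval wt d = ∑ᶠ d ∈ S, wtval wt d := by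
  rw [finsum_mem_eq_finite_toFinset_sum _ hS, ← Finset.sum_filter_eq_sum_of_absorbing _
    (· ∈ TRcset lhs rhs c) RT.size, ← finsum_mem_coe_finset, Finset.coe_filter]
  · simp only [Set.Finite.mem_toFinset]
    rfl
  intro x hx hbad
  rw [Set.Finite.mem_toFinset] at hx
  obtain ⟨w, hw, T, hT, habs⟩ := exists_absorbing_cotreesW hΩd hwt hclosed (hws x hx) hbad
  exact ⟨T, fun y hy => hS.mem_toFinset.2 (hcut x hx w hw (hT hy)),
    fun y hy => size_lt_of_mem_cotreesW hw.1 (hT hy), habs⟩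

end Closed

section DerivStep

variable {K N R : Type} [AddCommMonoid K] {lhs : R → N} {rhs : R → List N}

open RT

variable (lhs rhs) in
def derivStep (M : N → Set (RT R fun r => (rhs r).length)) (A : N) :
    Set (RT R fun r => (rhs r).length) :=
  {d | ∃ (r : R) (_ : lhs r = A) (ts : Fin (rhs r).length → RT R fun r => (rhs r).length),
    d = node r ts ∧ ∀ i, ts i ∈ M ((rhs r).get i)}

theorem derivStep_mono {M M' : N → Set (RT R fun r => (rhs r).length)} (h : M ≤ M') (A : N) :
    derivStep lhs rhs M A ⊆ derivStep lhs rhs M' A :=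
  fun _ ⟨r, hr, ts, hd, hts⟩ => ⟨r, hr, ts, hd, fun i => h _ (hts i)⟩

theorem derivStep_subset_TRA {M : N → Set (RT R fun r => (rhs r).length)}
    (hM : ∀ B, M B ⊆ TRA lhs rhs B) (A : N) : derivStep lhs rhs M A ⊆ TRA lhs rhs A :=
  fun _ ⟨r, hr, ts, hd, hts⟩ =>
    hd ▸ ⟨.node r ts (fun i => (hM _ (hts i)).2) (fun i => (hM _ (hts i)).1), hr⟩

variable [Fintype R]

theorem derivStep_eq_image {M : N → Set (RT R fun r => (rhs r).length)}
    (hM : ∀ B, (M B).Finite) (A : N) :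
    derivStep lhs rhs M A =
      (fun x : Σ r, Fin (rhs r).length → RT R fun r => (rhs r).length => node x.1 x.2) ''
      ↑((Finset.univ.filter (lhs · = A)).sigma
        fun r => Fintype.piFinset fun i => (hM ((rhs r).get i)).toFinset) := by
  ext d
  simp only [derivStep, Set.mem_ofPred_eq, Set.mem_image, Finset.mem_coe, Finset.mem_sigma,
    Finset.mem_filter, Finset.mem_univ, true_and, Fintype.mem_piFinset, Set.Finite.mem_toFinset,
    Sigma.exists]
  constructor
  · rintro ⟨r, hr, ts, rfl, hts⟩
    exact ⟨r, ts, ⟨hr, hts⟩, rfl⟩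
  · rintro ⟨r, ts, ⟨hr, hts⟩, rfl⟩
    exact ⟨r, hr, ts, rfl, hts⟩

theorem finsum_mem_derivStep {Ω : ∀ n : ℕ, Set ((Fin n → K) → K)} (hΩd : DistributiveOps Ω)
    {wt : ∀ r : R, (Fin (rhs r).length → K) → K} (hwt : ∀ r, wt r ∈ Ω (rhs r).length)
    {M : N → Set (RT R fun r => (rhs r).length)} (hM : ∀ B, (M B).Finite) (A : N) :
    ∑ᶠ d ∈ derivStep lhs rhs M A, wtval wt d =
      ∑ᶠ r ∈ {r | lhs r = A}, wt r fun i => ∑ᶠ x ∈ M ((rhs r).get i), wtval wt x := by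
  rw [derivStep_eq_image hM, finsum_mem_image node_sigma_injective.injOn,
    finsum_mem_coe_finset, Finset.sum_sigma, ← finsum_mem_coe_finset, Finset.coe_filter]
  refine finsum_mem_congr (by simp) fun r _ => ?_
  simp only [finsum_mem_eq_finite_toFinset_sum _ (hM _)]
  exact ((hΩd.toMultilinearMap (hwt r)).map_sum_finset _ _).symm

end DerivStep

section Recursion

variable {K N R : Type} [AddCommMonoid K] [Fintype N] [Nonempty N]
  {lhs : R → N} {rhs : R → List N} {e : Fin (Fintype.card N) → N}

open RT

theorem Mrec_zero (A : N) : Mrec lhs rhs e 0 A = ∅ := by rw [Mrec]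

theorem Mrec_succ (n : ℕ) (A : N) :
    Mrec lhs rhs e (n + 1) A =
      if select e n = A then derivStep lhs rhs (Mrec lhs rhs e n) A else Mrec lhs rhs e n A := by
  rw [Mrec]
  rfl

theorem Vrec_succ (wt : ∀ r : R, (Fin (rhs r).length → K) → K) (n : ℕ) (A : N) :
    Vrec lhs rhs wt e (n + 1) A =
      if select e n = A then
        ∑ᶠ r ∈ {r : R | lhs r = A}, wt r fun i => Vrec lhs rhs wt e n ((rhs r).get i)
      else Vrec lhs rhs wt e n A := by
  rw [Vrec]

theorem Mrec_subset_succ_of_subset_derivStep {n : ℕ}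
    (h : ∀ B, Mrec lhs rhs e n B ⊆ derivStep lhs rhs (Mrec lhs rhs e n) B) (A : N) :
    Mrec lhs rhs e n A ⊆ Mrec lhs rhs e (n + 1) A := by
  rw [Mrec_succ]
  split_ifs
  exacts [h A, subset_rfl]

theorem Mrec_subset_derivStep (n : ℕ) (A : N) :
    Mrec lhs rhs e n A ⊆ derivStep lhs rhs (Mrec lhs rhs e n) A := by
  induction n generalizing A with
  | zero => simp [Mrec_zero]
  | succ n ih =>
    have hmono := derivStep_mono (lhs := lhs) (Mrec_subset_succ_of_subset_derivStep ih) A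
    rw [Mrec_succ]
    split_ifs
    exacts [hmono, (ih A).trans hmono]

theorem Mrec_subset_succ (n : ℕ) (A : N) : Mrec lhs rhs e n A ⊆ Mrec lhs rhs e (n + 1) A :=
  Mrec_subset_succ_of_subset_derivStep (fun B => Mrec_subset_derivStep n B) A

theorem Mrec_subset_TRA (n : ℕ) (A : N) : Mrec lhs rhs e n A ⊆ TRA lhs rhs A := by
  induction n generalizing A with
  | zero => simp [Mrec_zero]
  | succ n ih =>
    rw [Mrec_succ]
    split_ifs
    exacts [derivStep_subset_TRA ih A, ih A]

theorem subAt_mem_Mrec {n : ℕ} {A : N} {d t : RT R fun r => (rhs r).length} {p : List ℕ}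
    (hd : d ∈ Mrec lhs rhs e n A) (hp : d.subAt p = some t) :
    t ∈ Mrec lhs rhs e n (lhs t.rootRule) := by
  induction n generalizing A d p with
  | zero => simp [Mrec_zero] at hd
  | succ n ih =>
    cases p with
    | nil =>
      rw [subAt_nil, Option.some_inj] at hp
      rwa [← hp, (Mrec_subset_TRA _ _ hd).2]
    | cons i p =>
      refine Mrec_subset_succ _ _ ?_
      rw [Mrec_succ] at hd
      split_ifs at hd
      · obtain ⟨r, -, ts, rfl, hts⟩ := hd
        obtain ⟨hi, hp⟩ := subAt_cons_eq_some hp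
        exact ih (hts _) hp
      · exact ih hd hp

theorem replaceAt_mem_Mrec {n : ℕ} {A : N} {d t s : RT R fun r => (rhs r).length}
    {p : List ℕ} (hd : d ∈ Mrec lhs rhs e n A) (hp : d.subAt p = some t)
    (hts : ∀ m B, t ∈ Mrec lhs rhs e m B → s ∈ Mrec lhs rhs e m B) :
    d.replaceAt p s ∈ Mrec lhs rhs e n A := by
  induction n generalizing A d p with
  | zero => simp [Mrec_zero] at hd
  | succ n ih =>
    cases p with
    | nil =>
      rw [subAt_nil, Option.some_inj] at hp
      rw [replaceAt_nil]
      exact hts _ _ (hp ▸ hd)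
    | cons i p =>
      rw [Mrec_succ] at hd ⊢
      split_ifs at hd ⊢
      · obtain ⟨r, hr, ts, rfl, hchild⟩ := hd
        obtain ⟨hi, hp⟩ := subAt_cons_eq_some hp
        rw [replaceAt_cons_of_lt (ar := fun r => (rhs r).length) hi]
        refine ⟨r, hr, _, rfl, fun j => ?_⟩
        by_cases hj : j = ⟨i, hi⟩
        · subst hj
          rw [Function.update_self]
          exact ih (hchild _) hp
        · rw [Function.update_of_ne hj]
          exact hchild j
      · exact ih hd hp

theorem cotreesW_subset_Mrec {n : ℕ} {A : N} {w : List R} (hw : ElementaryCycle w)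
    {d : RT R fun r => (rhs r).length} (hd : d ∈ Mrec lhs rhs e n A) :
    cotreesW w d ⊆ Mrec lhs rhs e n A := by
  have hcut : ∀ {x y}, x ∈ Mrec lhs rhs e n A → CutW w x y → y ∈ Mrec lhs rhs e n A := by
    rintro x _ hx ⟨p, q, t, s, hp, hq, hseq, rfl⟩
    obtain ⟨s', hs', hroot⟩ := hw.rootRule_eq_of_seqTo hseq
    obtain rfl : s' = s := Option.some_inj.1 (hs'.symm.trans hq)
    refine replaceAt_mem_Mrec hx hp fun m B ht => ?_
    rw [← (Mrec_subset_TRA m B ht).2, ← hroot]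
    exact subAt_mem_Mrec ht hq
  intro d' h
  induction h with
  | single h => exact hcut hd h
  | tail _ h ih => exact hcut ih h

variable [Fintype R]

theorem Mrec_finite (n : ℕ) (A : N) : (Mrec lhs rhs e n A).Finite := by
  induction n generalizing A with
  | zero => simp [Mrec_zero]
  | succ n ih =>
    rw [Mrec_succ]
    split_ifs
    · rw [derivStep_eq_image ih]
      exact Set.toFinite _
    · exact ih A

theorem Vrec_eq_finsum {Ω : ∀ n : ℕ, Set ((Fin n → K) → K)} (hΩd : DistributiveOps Ω)
    {wt : ∀ r : R, (Fin (rhs r).length → K) → K} (hwt : ∀ r, wt r ∈ Ω (rhs r).length)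
    (n : ℕ) (A : N) : Vrec lhs rhs wt e n A = ∑ᶠ d ∈ Mrec lhs rhs e n A, wtval wt d := by
  induction n generalizing A with
  | zero => rw [Vrec, Mrec_zero, finsum_mem_empty]
  | succ n ih =>
    rw [Vrec_succ, Mrec_succ]
    split_ifs
    · simp only [ih, finsum_mem_derivStep hΩd hwt (Mrec_finite n)]
    · exact ih A

end Recursion

theorem Mrec_grows_on_change_general {N R K : Type} [Fintype N] [Nonempty N] [Fintype R]
    [AddCommMonoid K]
    (Ω : ∀ n : ℕ, Set ((Fin n → K) → K)) (hΩd : DistributiveOps Ω)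
    (lhs : R → N) (rhs : R → List N)
    (wt : ∀ r : R, (Fin (rhs r).length → K) → K) (hwt : ∀ r : R, wt r ∈ Ω (rhs r).length)
    (c : ℕ) (hclosed : CClosed lhs rhs wt c)
    (e : Fin (Fintype.card N) → N) :
    ∀ (n : ℕ) (A : N),
      Vrec lhs rhs wt e (n + 1) A ≠ Vrec lhs rhs wt e n A →
        (Mrec lhs rhs e n A ∩ TRcset lhs rhs c) ⊂ (Mrec lhs rhs e (n + 1) A ∩ TRcset lhs rhs c) := by
  have hV (m : ℕ) (A : N) :
      Vrec lhs rhs wt e m A = ∑ᶠ d ∈ Mrec lhs rhs e m A ∩ TRcset lhs rhs c, wtval wt d := by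
    rw [Vrec_eq_finsum hΩd hwt, finsum_mem_inter_TRcset hΩd hwt hclosed (Mrec_finite m A)
      (fun d hd => (Mrec_subset_TRA m A hd).1) (fun d hd w hw => cotreesW_subset_Mrec hw hd)]
  intro n A hne
  refine (Set.inter_subset_inter_left _ (Mrec_subset_succ n A)).ssubset_of_ne fun heq => hne ?_
  rw [hV, hV, heq]

/-- In a `c`-closed weighted system, whenever the value of a nonterminal changes in an
iteration of the value computation algorithm, its set of at most `c`-cyclic derivation
trees grows properly. -/
theorem Mrec_grows_on_change {N R K : Type} [Fintype N] [Nonempty N] [Fintype R]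
    [AddCommMonoid K]
    (S : InfSum K) (hdc : S.DComplete)
    (Ω : ∀ n : ℕ, Set ((Fin n → K) → K)) (hΩ0 : HasZeroOps Ω) (hΩd : DistributiveOps Ω)
    (lhs : R → N) (rhs : R → List N)
    (wt : ∀ r : R, (Fin (rhs r).length → K) → K) (hwt : ∀ r : R, wt r ∈ Ω (rhs r).length)
    (c : ℕ) (hclosed : CClosed lhs rhs wt c)
    (e : Fin (Fintype.card N) → N) (he : Function.Bijective e) :
    ∀ (n : ℕ) (A : N),
      Vrec lhs rhs wt e (n + 1) A ≠ Vrec lhs rhs wt e n A →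
        (Mrec lhs rhs e n A ∩ TRcset lhs rhs c) ⊂ (Mrec lhs rhs e (n + 1) A ∩ TRcset lhs rhs c) :=
  Mrec_grows_on_change_general Ω hΩd lhs rhs wt hwt c hclosed e
end

section
/- Correctness of the value computation algorithm: let c ∈ ℕ, let the weighted system (N,R,wt,K) be c-closed, and consider the value computation recursion (V_n). If n₀ ∈ ℕ is such that V_n(A) = V_{n₀}(A) for every n ≥ n₀ and every A ∈ N (such n₀ exists), then for every nonterminal A ∈ N: V_{n₀}(A) = Σ_{d ∈ (T_R)_A} wt(d)_K, where Σ is the infinitary sum of K over the countable set (T_R)_A of trees of sort A. -/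
open scoped Classical

-- AUXILIARY LEMMAS (to be inserted above the theorem)
section IsumAux

variable {K : Type} [AddCommMonoid K]

lemma InfSum.isum_fintype_aux (S : InfSum K) :
    ∀ (n : ℕ) (I : Type) [Fintype I], Fintype.card I = n → ∀ f : I → K,
      S.isum f = ∑ i, f i := by
  intro n
  induction n with
  | zero =>
    intro I _ hc f
    have hI : IsEmpty I := Fintype.card_eq_zero_iff.mp hc
    rw [S.isum_empty f hI]
    rw [Finset.univ_eq_empty, Finset.sum_empty]
  | succ n ih =>
    intro I _ hc f
    obtain ⟨j⟩ : Nonempty I := Fintype.card_pos_iff.mp (by omega)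
    have hpart := S.isum_partition f (fun i => decide (i = j))
    have htrue : (S.isum fun i : {i : I // decide (i = j) = true} => f i.1) = f j := by
      refine S.isum_single (fun i : {i : I // decide (i = j) = true} => f i.1)
        ⟨j, decide_eq_true rfl⟩ fun x => Subtype.ext (of_decide_eq_true x.2)
    have hcard : Fintype.card {i : I // decide (i = j) = false} = n := by
      have hiff : ∀ x : I, decide (x = j) = false ↔ ¬ x = j := fun x => decide_eq_false_iff_not
      have h1 : Fintype.card {i : I // decide (i = j) = false} =
          Fintype.card {i : I // ¬ i = j} :=
        Fintype.card_congr (Equiv.subtypeEquivRight hiff)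
      rw [h1, Fintype.card_subtype_compl, Fintype.card_subtype_eq, hc]
      omega
    have hfalse : (S.isum fun i : {i : I // decide (i = j) = false} => f i.1) =
        ∑ i : {i : I // decide (i = j) = false}, f i.1 := ih _ hcard _
    have hbool := S.isum_pair
      (fun b : Bool => S.isum fun i : {i : I // decide (i = j) = b} => f i.1)
      true false (by simp) (fun b => by cases b <;> simp)
    rw [hpart, hbool]
    have hsub := Finset.sum_subtype (p := fun i : I => decide (i = j) = false)
      (F := inferInstance)
      (Finset.univ.erase j) (by intro x; simp [Finset.mem_erase]) f
    show (S.isum fun i : {i : I // decide (i = j) = true} => f i.1) +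
        (S.isum fun i : {i : I // decide (i = j) = false} => f i.1) = ∑ i, f i
    rw [htrue, hfalse, ← hsub, Finset.add_sum_erase _ f (Finset.mem_univ j)]

lemma InfSum.isum_fintype (S : InfSum K) {I : Type} [Fintype I] (f : I → K) :
    S.isum f = ∑ i, f i :=
  S.isum_fintype_aux (Fintype.card I) I rfl f

lemma InfSum.isum_equiv (S : InfSum K) {I J : Type} [Countable I] [Countable J]
    (e : I ≃ J) (f : J → K) : S.isum f = S.isum fun i => f (e i) := by
  have h := S.isum_partition f fun j => e.symm j
  have h2 : (fun i : I => S.isum fun x : {j : J // e.symm j = i} => f x.1) =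
      fun i : I => f (e i) := by
    funext i
    exact S.isum_single (fun x : {j : J // e.symm j = i} => f x.1)
      ⟨e i, e.symm_apply_apply i⟩
      fun x => Subtype.ext ((Equiv.symm_apply_eq e).mp x.2)
  rw [h, h2]

/-- Package a distributive operation as a multilinear map over `ℕ`. -/
noncomputable def mkML {n : ℕ} (ω : (Fin n → K) → K)
    (hadd : ∀ (x : Fin n → K) (i : Fin n) (a b : K),
      ω (Function.update x i (a + b)) = ω (Function.update x i a) + ω (Function.update x i b))
    (hzero : ∀ x : Fin n → K, (∃ i, x i = 0) → ω x = 0) :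
    MultilinearMap ℕ (fun _ : Fin n => K) K where
  toFun := ω
  map_update_add' := by
    intro inst m i a b
    have hupd : ∀ (x : Fin n → K) (c : K),
        @Function.update _ _ inst x i c = @Function.update _ _ (instDecidableEqFin n) x i c := by
      intro x c; funext j; by_cases h : j = i <;> simp [Function.update, h]
    rw [hupd, hupd, hupd]
    exact hadd m i a b
  map_update_smul' := by
    intro inst m i c a
    have hupd : ∀ (x : Fin n → K) (c : K),
        @Function.update _ _ inst x i c = @Function.update _ _ (instDecidableEqFin n) x i c := by
      intro x c; funext j; by_cases h : j = i <;> simp [Function.update, h]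
    rw [hupd, hupd]
    induction c with
    | zero =>
      rw [zero_nsmul, zero_nsmul]
      exact hzero _ ⟨i, by simp⟩
    | succ k ihk =>
      rw [succ_nsmul, hadd, ihk, succ_nsmul]

@[simp] lemma mkML_apply {n : ℕ} (ω : (Fin n → K) → K) (hadd hzero) (x : Fin n → K) :
    mkML ω hadd hzero x = ω x := rfl

end IsumAux

section VCAux

variable {N R K : Type} [Fintype N] [Nonempty N] [Fintype R] [AddCommMonoid K]
variable (lhs : R → N) (rhs : R → List N)

/-- One step of the derivation-set recursion, as a `Finset`. -/
noncomputable def Dstep (Dprev : N → Finset (RT R fun r => (rhs r).length)) (A : N) :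
    Finset (RT R fun r => (rhs r).length) :=
  (Finset.univ.filter fun r => lhs r = A).biUnion fun r =>
    (Fintype.piFinset fun i => Dprev ((rhs r).get i)).image (RT.node r)

variable (e : Fin (Fintype.card N) → N)

/-- The derivation-set recursion, as `Finset`s. -/
noncomputable def Dfin : ℕ → N → Finset (RT R fun r => (rhs r).length)
  | 0, _ => ∅
  | n + 1, A => if select e n = A then Dstep lhs rhs (Dfin n) A else Dfin n A

lemma Dfin_zero (A : N) : Dfin lhs rhs e 0 A = ∅ := rfl

lemma Dfin_succ (n : ℕ) (A : N) :
    Dfin lhs rhs e (n + 1) A =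
      if select e n = A then Dstep lhs rhs (Dfin lhs rhs e n) A else Dfin lhs rhs e n A := rfl

lemma RTnode_inj (rhs : R → List N) (r : R)
    (x y : Fin (rhs r).length → RT R fun r => (rhs r).length)
    (h : RT.node (ar := fun r => (rhs r).length) r x = RT.node r y) : x = y :=
  eq_of_heq (RT.node.inj h).2

lemma Dstep_mono {D1 D2 : N → Finset (RT R fun r => (rhs r).length)}
    (h : ∀ B, D1 B ⊆ D2 B) (A : N) : Dstep lhs rhs D1 A ⊆ Dstep lhs rhs D2 A := by
  intro d hd
  obtain ⟨r, hr, hd⟩ := Finset.mem_biUnion.mp hd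
  obtain ⟨t, ht, rfl⟩ := Finset.mem_image.mp hd
  exact Finset.mem_biUnion.mpr ⟨r, hr, Finset.mem_image.mpr
    ⟨t, Fintype.mem_piFinset.mpr fun i => h _ (Fintype.mem_piFinset.mp ht i), rfl⟩⟩

lemma Dfin_mono : ∀ n m, m ≤ n → ∀ A, Dfin lhs rhs e m A ⊆ Dfin lhs rhs e n A := by
  intro n
  induction n using Nat.strong_induction_on with
  | _ n IHs =>
    intro m hm A
    rcases Nat.eq_or_lt_of_le hm with rfl | hlt
    · exact subset_rfl
    · obtain ⟨k, rfl⟩ : ∃ k, n = k + 1 := ⟨n - 1, by omega⟩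
      refine subset_trans (IHs k (by omega) m (by omega) A) ?_
      rw [Dfin_succ]
      by_cases hsel : select e k = A
      · rw [if_pos hsel]
        have claim : ∀ j, j ≤ k →
            Dfin lhs rhs e j A ⊆ Dstep lhs rhs (Dfin lhs rhs e k) A := by
          intro j
          induction j with
          | zero => intro _ d hd; simp [Dfin_zero] at hd
          | succ i IHj =>
            intro hik
            rw [Dfin_succ]
            by_cases hsi : select e i = A
            · rw [if_pos hsi]
              exact Dstep_mono lhs rhs (fun B => IHs k (by omega) i (by omega) B) A
            · rw [if_neg hsi]
              exact IHj (by omega)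
        exact claim k le_rfl
      · rw [if_neg hsel]

lemma Dfin_wellSorted : ∀ n (A : N) d, d ∈ Dfin lhs rhs e n A →
    WellSorted lhs rhs d ∧ lhs d.rootRule = A := by
  intro n
  induction n with
  | zero => intro A d hd; simp [Dfin_zero] at hd
  | succ n IH =>
    intro A d hd
    rw [Dfin_succ] at hd
    by_cases hsel : select e n = A
    · rw [if_pos hsel] at hd
      obtain ⟨r, hr, hd⟩ := Finset.mem_biUnion.mp hd
      obtain ⟨t, ht, rfl⟩ := Finset.mem_image.mp hd
      have hlr : lhs r = A := (Finset.mem_filter.mp hr).2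
      have hch := Fintype.mem_piFinset.mp ht
      refine ⟨WellSorted.node r t (fun i => (IH _ _ (hch i)).2) (fun i => (IH _ _ (hch i)).1), ?_⟩
      simpa [RT.rootRule] using hlr
    · rw [if_neg hsel] at hd
      exact IH A d hd

lemma Dfin_complete (he : Function.Bijective e) :
    ∀ d : RT R fun r => (rhs r).length, WellSorted lhs rhs d →
      ∀ A, lhs d.rootRule = A → ∃ n, d ∈ Dfin lhs rhs e n A := by
  intro d
  induction d with
  | node r ts IH =>
    intro hws A hA
    cases hws with
    | node _ _ hsort hrec =>
      have hch : ∀ i, ∃ n, ts i ∈ Dfin lhs rhs e n ((rhs r).get i) :=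
        fun i => IH i (hrec i) _ (hsort i)
      choose nf hnf using hch
      set M := Finset.univ.sup nf with hM
      obtain ⟨a, ha⟩ := he.2 A
      have hMle : M ≤ a.1 + Fintype.card N * M :=
        le_add_of_nonneg_of_le (Nat.zero_le _) (Nat.le_mul_of_pos_left M Fintype.card_pos)
      have hsel : select e (a.1 + Fintype.card N * M) = A := by
        have hmod : (a.1 + Fintype.card N * M) % Fintype.card N = a.1 := by
          rw [Nat.add_mul_mod_self_left, Nat.mod_eq_of_lt a.2]
        unfold select
        rw [← ha]
        congr 1
        exact Fin.ext hmod
      refine ⟨a.1 + Fintype.card N * M + 1, ?_⟩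
      rw [Dfin_succ, if_pos hsel]
      refine Finset.mem_biUnion.mpr ⟨r, Finset.mem_filter.mpr ⟨Finset.mem_univ r, hA⟩,
        Finset.mem_image.mpr ⟨ts, Fintype.mem_piFinset.mpr fun i => ?_, rfl⟩⟩
      exact Dfin_mono lhs rhs e _ _ (le_trans (Finset.le_sup (Finset.mem_univ i)) hMle) _ (hnf i)

lemma Vrec_eq_sum_Dfin (wt : ∀ r : R, (Fin (rhs r).length → K) → K)
    (Ω : ∀ n : ℕ, Set ((Fin n → K) → K)) (hΩd : DistributiveOps Ω)
    (hwt : ∀ r : R, wt r ∈ Ω (rhs r).length) :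
    ∀ n (A : N), Vrec lhs rhs wt e n A = ∑ d ∈ Dfin lhs rhs e n A, wtval wt d := by
  intro n
  induction n with
  | zero => intro A; simp [Vrec, Dfin_zero]
  | succ n IH =>
    intro A
    rw [Dfin_succ]
    by_cases hsel : select e n = A
    · rw [if_pos hsel]
      have hV : Vrec lhs rhs wt e (n + 1) A =
          ∑ᶠ r ∈ {r : R | lhs r = A}, wt r fun i => Vrec lhs rhs wt e n ((rhs r).get i) := by
        rw [Vrec, if_pos hsel]
      rw [hV]
      have hset : {r : R | lhs r = A} = ↑(Finset.univ.filter fun r => lhs r = A) := by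
        ext r; simp
      rw [hset, finsum_mem_coe_finset, Dstep]
      have hdisj : Set.PairwiseDisjoint
          ↑(Finset.univ.filter fun r => lhs r = A)
          (fun r => (Fintype.piFinset fun i =>
            Dfin lhs rhs e n ((rhs r).get i)).image (RT.node r)) := by
        intro r₁ _ r₂ _ hne
        simp only [Function.onFun]
        rw [Finset.disjoint_left]
        intro d hd1 hd2
        obtain ⟨t1, -, rfl⟩ := Finset.mem_image.mp hd1
        obtain ⟨t2, -, heq⟩ := Finset.mem_image.mp hd2
        exact hne ((RT.node.inj heq).1.symm)
      rw [Finset.sum_biUnion hdisj]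
      refine Finset.sum_congr rfl fun r _ => ?_
      rw [Finset.sum_image (fun x _ y _ h => RTnode_inj rhs r x y h)]
      have hd := hΩd _ (wt r) (hwt r)
      have hml := (mkML (wt r) hd.1 hd.2).map_sum_finset
        (g := fun (i : Fin (rhs r).length) (d : RT R fun r => (rhs r).length) => wtval wt d)
        (A := fun i => Dfin lhs rhs e n ((rhs r).get i))
      simp only [mkML_apply] at hml
      calc wt r (fun i => Vrec lhs rhs wt e n ((rhs r).get i))
          = wt r (fun i => ∑ d ∈ Dfin lhs rhs e n ((rhs r).get i), wtval wt d) := by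
            congr 1; funext i; exact IH ((rhs r).get i)
        _ = ∑ t ∈ Fintype.piFinset (fun i => Dfin lhs rhs e n ((rhs r).get i)),
              wt r fun i => wtval wt (t i) := hml
        _ = ∑ t ∈ Fintype.piFinset (fun i => Dfin lhs rhs e n ((rhs r).get i)),
              wtval wt (RT.node r t) := rfl
    · rw [if_neg hsel]
      have hV : Vrec lhs rhs wt e (n + 1) A = Vrec lhs rhs wt e n A := by
        rw [Vrec, if_neg hsel]
      rw [hV]
      exact IH A

end VCAux

/-- Correctness of the value computation algorithm: for every `c`-closed weighted system,
after stabilization the computed value of each nonterminal `A` equals the infinitary sum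
of the weights of all trees of sort `A`. -/
theorem value_computation_correct {N R K : Type} [Fintype N] [Nonempty N] [Fintype R]
    [AddCommMonoid K] (lhs : R → N) (rhs : R → List N)
    [Countable (RT R fun r => (rhs r).length)]
    (S : InfSum K) (hdc : S.DComplete)
    (Ω : ∀ n : ℕ, Set ((Fin n → K) → K)) (hΩ0 : HasZeroOps Ω) (hΩd : DistributiveOps Ω)
    (wt : ∀ r : R, (Fin (rhs r).length → K) → K) (hwt : ∀ r : R, wt r ∈ Ω (rhs r).length)
    (c : ℕ) (hclosed : CClosed lhs rhs wt c)
    (e : Fin (Fintype.card N) → N) (he : Function.Bijective e) :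
    ∀ n₀ : ℕ, (∀ n, n₀ ≤ n → ∀ A : N, Vrec lhs rhs wt e n A = Vrec lhs rhs wt e n₀ A) →
      ∀ A : N,
        Vrec lhs rhs wt e n₀ A = S.isum fun d : ↥(TRA lhs rhs A) => wtval wt d.1 := by
  intro n₀ hstab A
  have hex : ∀ d : ↥(TRA lhs rhs A), ∃ n, d.1 ∈ Dfin lhs rhs e n A :=
    fun d => Dfin_complete lhs rhs e he d.1 d.2.1 A d.2.2
  set g : ↥(TRA lhs rhs A) → ℕ := fun d => Nat.find (hex d) with hg
  have hpart := S.isum_partition (fun d : ↥(TRA lhs rhs A) => wtval wt d.1) g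
  set G : ℕ → Finset (RT R fun r => (rhs r).length) :=
    fun n => Dfin lhs rhs e n A \ Dfin lhs rhs e (n - 1) A with hG
  have hmemG : ∀ n (d : RT R fun r => (rhs r).length),
      d ∈ G n ↔ d ∈ Dfin lhs rhs e n A ∧ ∀ m < n, d ∉ Dfin lhs rhs e m A := by
    intro n d
    cases n with
    | zero =>
      simp [hG, Dfin_zero]
    | succ k =>
      simp only [hG, Finset.mem_sdiff, Nat.add_sub_cancel]
      constructor
      · rintro ⟨h1, h2⟩
        exact ⟨h1, fun m hm hmem => h2 (Dfin_mono lhs rhs e k m (by omega) A hmem)⟩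
      · rintro ⟨h1, h2⟩
        exact ⟨h1, h2 k (by omega)⟩
  have hFib : ∀ n, (S.isum fun i : {i : ↥(TRA lhs rhs A) // g i = n} => wtval wt i.1.1) =
      ∑ d ∈ G n, wtval wt d := by
    intro n
    let eqv : {i : ↥(TRA lhs rhs A) // g i = n} ≃ {x // x ∈ G n} :=
      { toFun := fun x => ⟨x.1.1, (hmemG n x.1.1).mpr ((Nat.find_eq_iff (hex x.1)).mp x.2)⟩
        invFun := fun x =>
          ⟨⟨x.1, ⟨(Dfin_wellSorted lhs rhs e n A x.1 ((hmemG n x.1).mp x.2).1).1,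
                  (Dfin_wellSorted lhs rhs e n A x.1 ((hmemG n x.1).mp x.2).1).2⟩⟩,
            (Nat.find_eq_iff _).mpr ((hmemG n x.1).mp x.2)⟩
        left_inv := fun x => Subtype.ext (Subtype.ext rfl)
        right_inv := fun x => Subtype.ext rfl }
    rw [S.isum_equiv eqv.symm, S.isum_fintype]
    rw [← Finset.sum_coe_sort (G n) (fun d => wtval wt d)]
    exact Finset.sum_congr rfl fun i _ => rfl
  have hpsum : ∀ m, (∑ i ∈ Finset.range (m + 1), ∑ d ∈ G i, wtval wt d) =
      ∑ d ∈ Dfin lhs rhs e m A, wtval wt d := by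
    intro m
    induction m with
    | zero => simp [hG, Dfin_zero]
    | succ m IH =>
      rw [Finset.sum_range_succ, IH, add_comm]
      have hsub : Dfin lhs rhs e m A ⊆ Dfin lhs rhs e (m + 1) A :=
        Dfin_mono lhs rhs e (m + 1) m (by omega) A
      have := Finset.sum_sdiff (f := fun d => wtval wt d) hsub
      simpa [hG, Nat.add_sub_cancel] using this
  have hdcapp : S.isum (fun n => ∑ d ∈ G n, wtval wt d) = Vrec lhs rhs wt e n₀ A := by
    refine hdc _ _ ⟨n₀, fun m hm => ?_⟩
    rw [hpsum m, ← Vrec_eq_sum_Dfin lhs rhs e wt Ω hΩd hwt m A, hstab m hm]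
  rw [hpart]
  have hfun : (fun n : ℕ =>
      S.isum fun i : {i : ↥(TRA lhs rhs A) // g i = n} => wtval wt i.1.1) =
      fun n => ∑ d ∈ G n, wtval wt d := funext hFib
  rw [hfun, hdcapp]
end

section
/- Every weighted system whose weight algebra is a superior M-monoid is closed; more precisely, if (K,⪯) is a total order, (K,min,0,Ω,inf) is a complete and distributive M-monoid in which ⊕ is the binary minimum with respect to ⪯ (so 0 is the ⪯-greatest element), the infinitary sum of any countable family is its infimum (which exists in K), and every ω ∈ Ω is superior (monotone with respect to ⪯ in each argument, and max_⪯{k₁,…,k_k} ⪯ ω(k₁,…,k_k) for all arguments), then every weighted system (N,R,wt,K) is 0-closed. -/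
open scoped Classical

/-!
Since `+` is `min`, it suffices that some `w`-cutout tree of `d` weighs at most `d`.
Superiority makes the weight of a tree at least that of each of its subtrees and monotone
under replacing a subtree by a lighter one, so no cut increases the weight, and a
`(1, w)`-cyclic leaf provides a first `w`-cut. The cutout trees must also form a finite set,
since `∑ᶠ` is `0` on infinite support: height is the weight in the superior algebra
`x ↦ sup (xᵢ + 1)` over `ℕ`, so cuts do not increase it either, and over finitely many rules
there are only finitely many trees of bounded height.
-/

structure IsSuperior {K : Type} [Preorder K] {n : ℕ} (ω : (Fin n → K) → K) : Prop where
  monotone_update : ∀ (x : Fin n → K) (i : Fin n) (a b : K), a ≤ b →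
    ω (Function.update x i a) ≤ ω (Function.update x i b)
  le_apply : ∀ (x : Fin n → K) (i : Fin n), x i ≤ ω x

namespace RT

variable {R : Type} {ar : R → ℕ}

theorem seqTo_length : ∀ {p : List ℕ} {d : RT R ar} {ρ : List R},
    seqTo d p = some ρ → ρ.length = p.length + 1
  | [], node r ts, ρ, h => by
    simp only [seqTo, Option.some.injEq] at h
    simp [← h]
  | i :: p, node r ts, ρ, h => by
    simp only [seqTo] at h
    split_ifs at h with hi
    obtain ⟨l, hl, rfl⟩ := Option.map_eq_some_iff.mp h
    simp [seqTo_length hl]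

theorem seqTo_take : ∀ {p : List ℕ} {d : RT R ar} {ρ : List R} (n : ℕ),
    seqTo d p = some ρ → seqTo d (p.take n) = some (ρ.take (n + 1))
  | [], node r ts, ρ, n, h => by
    simp only [seqTo, Option.some.injEq] at h
    simp [seqTo, ← h]
  | i :: p, node r ts, ρ, 0, h => by
    simp only [seqTo] at h
    split_ifs at h with hi
    obtain ⟨l, hl, rfl⟩ := Option.map_eq_some_iff.mp h
    simp [seqTo]
  | i :: p, node r ts, ρ, n + 1, h => by
    simp only [seqTo] at h
    split_ifs at h with hi
    obtain ⟨l, hl, rfl⟩ := Option.map_eq_some_iff.mp h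
    simp [seqTo, hi, seqTo_take n hl]

theorem exists_subAt_take_of_seqTo : ∀ {p : List ℕ} {d : RT R ar} {ρ : List R} {n : ℕ},
    seqTo d p = some ρ → n ≤ p.length →
    ∃ t, subAt d (p.take n) = some t ∧ seqTo t (p.drop n) = some (ρ.drop n)
  | _, d, _, 0, h, _ => ⟨d, by simp [subAt], by simpa using h⟩
  | i :: p, node r ts, ρ, n + 1, h, hn => by
    simp only [seqTo] at h
    split_ifs at h with hi
    obtain ⟨l, hl, rfl⟩ := Option.map_eq_some_iff.mp h
    simpa [subAt, hi] using exists_subAt_take_of_seqTo hl (by simpa using hn)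

end RT

section Weights

variable {R K : Type} {ar : R → ℕ} [Preorder K] {wt : ∀ r : R, (Fin (ar r) → K) → K}

theorem wtval_subAt_le (hwt : ∀ r, IsSuperior (wt r)) :
    ∀ {p : List ℕ} {d s : RT R ar}, d.subAt p = some s → wtval wt s ≤ wtval wt d
  | [], _, _, h => by
    simp only [RT.subAt, Option.some.injEq] at h
    rw [h]
  | i :: p, .node r ts, s, h => by
    simp only [RT.subAt] at h
    split_ifs at h with hi
    exact (wtval_subAt_le hwt h).trans ((hwt r).le_apply (fun j => wtval wt (ts j)) ⟨i, hi⟩)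

theorem wtval_replaceAt_le (hwt : ∀ r, IsSuperior (wt r)) :
    ∀ {p : List ℕ} {d t s : RT R ar}, d.subAt p = some t → wtval wt s ≤ wtval wt t →
      wtval wt (d.replaceAt p s) ≤ wtval wt d
  | [], _, _, _, h, hs => by
    simp only [RT.subAt, Option.some.injEq] at h
    simpa [RT.replaceAt, h] using hs
  | i :: p, .node r ts, t, s, h, hs => by
    simp only [RT.subAt] at h
    split_ifs at h with hi
    have hupd : (fun j => wtval wt (if j.1 = i then (ts j).replaceAt p s else ts j)) =
        Function.update (fun j => wtval wt (ts j)) ⟨i, hi⟩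
          (wtval wt ((ts ⟨i, hi⟩).replaceAt p s)) := by
      funext j
      by_cases hj : j = ⟨i, hi⟩
      · subst hj; simp
      · simp [hj, Fin.ext_iff.not.mp hj]
    simp only [RT.replaceAt, wtval]
    rw [hupd]
    simpa using (hwt r).monotone_update (fun j => wtval wt (ts j)) ⟨i, hi⟩ _ _
      (wtval_replaceAt_le hwt h hs)

theorem wtval_le_of_cutW (hwt : ∀ r, IsSuperior (wt r)) {w : List R} {d d' : RT R ar}
    (h : CutW w d d') : wtval wt d' ≤ wtval wt d := by
  obtain ⟨p, q, t, s, hp, hq, -, rfl⟩ := h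
  exact wtval_replaceAt_le hwt hp (wtval_subAt_le hwt hq)

theorem wtval_le_of_mem_cotreesW (hwt : ∀ r, IsSuperior (wt r)) {w : List R} {d d' : RT R ar}
    (h : d' ∈ cotreesW w d) : wtval wt d' ≤ wtval wt d := by
  induction h with
  | single h => exact wtval_le_of_cutW hwt h
  | tail _ h ih => exact (wtval_le_of_cutW hwt h).trans ih

end Weights

theorem isSuperior_sup_add_one {n : ℕ} :
    IsSuperior fun x : Fin n → ℕ => Finset.univ.sup fun i => x i + 1 where
  monotone_update _ _ _ _ hab := Finset.sup_mono_fun fun j _ =>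
    Nat.add_le_add_right (update_le_update_iff'.2 hab j) 1
  le_apply x i := (Nat.le_succ _).trans (Finset.le_sup (f := fun i => x i + 1) (Finset.mem_univ i))

namespace RT

variable {R : Type} {ar : R → ℕ}

theorem height_eq_wtval :
    ∀ t : RT R ar, t.height = wtval (fun _ x => Finset.univ.sup fun i => x i + 1) t
  | node r ts => by simp only [height, wtval, height_eq_wtval]

theorem finite_setOf_height_lt [Finite R] : ∀ n : ℕ, {t : RT R ar | t.height < n}.Finite
  | 0 => by simp
  | n + 1 => by
    refine (Set.finite_iUnion fun r : R =>
      (Set.Finite.pi fun _ : Fin (ar r) => finite_setOf_height_lt n).image (node r)).subset ?_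
    rintro ⟨r, ts⟩ ht
    refine Set.mem_iUnion.2 ⟨r, ts, fun i _ => ?_, rfl⟩
    have : (ts i).height + 1 ≤ (node r ts).height :=
      Finset.le_sup (f := fun i => (ts i).height + 1) (Finset.mem_univ i)
    simp only [Set.mem_ofPred_eq] at ht ⊢
    omega

end RT

section Cutouts

variable {R : Type} {ar : R → ℕ}

theorem height_le_of_mem_cotreesW {w : List R} {d d' : RT R ar} (h : d' ∈ cotreesW w d) :
    d'.height ≤ d.height := by
  rw [RT.height_eq_wtval, RT.height_eq_wtval]
  exact wtval_le_of_mem_cotreesW (fun _ => isSuperior_sup_add_one) h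

theorem finite_cotreesW [Finite R] (w : List R) (d : RT R ar) : (cotreesW w d).Finite :=
  (RT.finite_setOf_height_lt (d.height + 1)).subset fun _ h =>
    Nat.lt_succ_of_le (height_le_of_mem_cotreesW h)

theorem exists_cutW_of_seqTo {d : RT R ar} {p : List ℕ} {u w v : List R}
    (h : d.seqTo p = some (u ++ w ++ v)) (hw : w ≠ []) : ∃ d', CutW w d d' := by
  have hlen := RT.seqTo_length h
  have hw' : 0 < w.length := List.length_pos_iff.2 hw
  simp only [List.length_append] at hlen
  obtain ⟨t, ht, htw⟩ := RT.exists_subAt_take_of_seqTo h (n := u.length) (by omega)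
  rw [List.append_assoc, List.drop_left] at htw
  obtain ⟨s, hs, -⟩ := RT.exists_subAt_take_of_seqTo htw (n := w.length - 1)
    (by simp only [List.length_drop]; omega)
  refine ⟨_, p.take u.length, (p.drop u.length).take (w.length - 1), t, s, ht, hs, ?_, rfl⟩
  rw [RT.seqTo_take _ htw, Nat.sub_add_cancel hw', List.take_left]

end Cutouts

theorem finsum_mem_le_of_mem {α K : Type} [AddCommMonoid K] [LinearOrder K]
    (hadd : ∀ a b : K, a + b = min a b) {s : Set α} (hs : s.Finite) {x : α} (hx : x ∈ s)
    (f : α → K) : ∑ᶠ y ∈ s, f y ≤ f x := by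
  rw [← Set.insert_sdiff_self_of_mem hx, finsum_mem_insert f (by simp) hs.sdiff, hadd]
  exact min_le_left _ _

theorem superior_implies_closed_general {N R K : Type} [Fintype R]
    [LinearOrder K] [AddCommMonoid K]
    (hadd : ∀ a b : K, a + b = min a b)
    (Ω : ∀ n : ℕ, Set ((Fin n → K) → K))
    (hsup : ∀ n : ℕ, ∀ ω ∈ Ω n,
      (∀ (x : Fin n → K) (i : Fin n) (a b : K), a ≤ b →
        ω (Function.update x i a) ≤ ω (Function.update x i b)) ∧
      ∀ (x : Fin n → K) (i : Fin n), x i ≤ ω x)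
    (lhs : R → N) (rhs : R → List N)
    (wt : ∀ r : R, (Fin (rhs r).length → K) → K) (hwt : ∀ r : R, wt r ∈ Ω (rhs r).length) :
    CClosed lhs rhs wt 0 := by
  have hsuperior : ∀ r, IsSuperior (wt r) := fun r =>
    ⟨(hsup _ _ (hwt r)).1, (hsup _ _ (hwt r)).2⟩
  rintro d - w hw ⟨p, -, ρ, hseq, -, v, rfl, -⟩
  obtain ⟨d₀, hcut⟩ : ∃ d₀, CutW w d d₀ :=
    exists_cutW_of_seqTo (u := v 0) (v := v 1) (by simpa using hseq)
      (List.ne_nil_of_length_pos (Nat.zero_lt_of_lt hw.1))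
  rw [hadd, min_eq_right]
  calc ∑ᶠ d' ∈ cotreesW w d, wtval wt d'
      ≤ wtval wt d₀ := finsum_mem_le_of_mem hadd (finite_cotreesW w d) (.single hcut) _
    _ ≤ wtval wt d := wtval_le_of_cutW hsuperior hcut

/-- Every weighted system whose weight algebra is a superior M-monoid is (0-)closed:
`(K, ⪯)` is a total order, the addition is binary minimum (so `0` is the greatest
element), the infinitary sum of any countable family is its infimum, and every operation
in `Ω` is superior. -/
theorem superior_implies_closed {N R K : Type} [Fintype N] [Nonempty N] [Fintype R]
    [LinearOrder K] [AddCommMonoid K]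
    (hadd : ∀ a b : K, a + b = min a b)
    (hzero_top : ∀ a : K, a ≤ 0)
    (S : InfSum K)
    (hinf : ∀ (I : Type) [Countable I] (f : I → K), IsGLB (Set.range f) (S.isum f))
    (Ω : ∀ n : ℕ, Set ((Fin n → K) → K)) (hΩ0 : HasZeroOps Ω) (hΩd : DistributiveOps Ω)
    (hsup : ∀ n : ℕ, ∀ ω ∈ Ω n,
      (∀ (x : Fin n → K) (i : Fin n) (a b : K), a ≤ b →
        ω (Function.update x i a) ≤ ω (Function.update x i b)) ∧
      ∀ (x : Fin n → K) (i : Fin n), x i ≤ ω x)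
    (lhs : R → N) (rhs : R → List N)
    (wt : ∀ r : R, (Fin (rhs r).length → K) → K) (hwt : ∀ r : R, wt r ∈ Ω (rhs r).length) :
    CClosed lhs rhs wt 0 :=
  superior_implies_closed_general hadd Ω hsup lhs rhs wt hwt
end
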